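/- Let A ∈ ℝ^{n×n} and B ∈ ℝ^{n×p}. The following are equivalent: (a) the pair (A,B) is controllable; (b) rank [λI − A, B] = n (as a complex n × (n+p) matrix) for all λ ∈ ℂ; (c) rank [λI − A, B] = n for every eigenvalue λ ∈ ℂ of A. -/

import Mathlib

open Matrix

/-- The Kalman matrix `M = [B, AB, …, A^{n−1}B]`. -/
noncomputable def kalmanMatrix {n p : ℕ} (A : Matrix (Fin n) (Fin n) ℝ)
    (B : Matrix (Fin n) (Fin p) ℝ) : Matrix (Fin n) (Fin n × Fin p) ℝ :=
  Matrix.of fun i jk => (A ^ (jk.1 : ℕ) * B) i jk.2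

/-- The complex `n × (n+p)` Hautus matrix `[λI − A, B]`. -/
noncomputable def hautusMatrix {n p : ℕ} (A : Matrix (Fin n) (Fin n) ℝ)
    (B : Matrix (Fin n) (Fin p) ℝ) (l : ℂ) : Matrix (Fin n) (Fin n ⊕ Fin p) ℂ :=
  Matrix.fromCols (l • (1 : Matrix (Fin n) (Fin n) ℂ) - A.map Complex.ofReal)
    (B.map Complex.ofReal)

/- Auxiliary lemmas -/

lemma rank_eq_card_iff_vecMul {m : ℕ} {K : Type*} [Field K] {q : Type*} [Fintype q]
    (M : Matrix (Fin m) q K) :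
    M.rank = m ↔ ∀ z : Fin m → K, z ᵥ* M = 0 → z = 0 := by
  rw [← Matrix.rank_transpose, Matrix.rank]
  have hrn := LinearMap.finrank_range_add_finrank_ker (Mᵀ.mulVecLin)
  have hd : Module.finrank K (Fin m → K) = m := by simp
  rw [hd] at hrn
  constructor
  · intro h z hz
    have hker : LinearMap.ker Mᵀ.mulVecLin = ⊥ := by
      apply Submodule.finrank_eq_zero.mp
      omega
    have : z ∈ LinearMap.ker Mᵀ.mulVecLin := by
      rw [LinearMap.mem_ker, mulVecLin_apply, mulVec_transpose, hz]
    rwa [hker, Submodule.mem_bot] at this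
  · intro h
    have hker : LinearMap.ker Mᵀ.mulVecLin = ⊥ := by
      rw [LinearMap.ker_eq_bot']
      intro z hz
      exact h z (by rwa [mulVecLin_apply, mulVec_transpose] at hz)
    rw [hker] at hrn
    simpa using hrn

lemma map_pow_mul {n p : ℕ} (A : Matrix (Fin n) (Fin n) ℝ) (B : Matrix (Fin n) (Fin p) ℝ)
    (k : ℕ) :
    (A ^ k * B).map Complex.ofReal
      = (A.map Complex.ofReal) ^ k * (B.map Complex.ofReal) := by
  have hco : Complex.ofReal = ⇑Complex.ofRealHom := rfl
  rw [hco, Matrix.map_mul (f := Complex.ofRealHom)]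
  congr 1
  have := map_pow ((Complex.ofRealHom.mapMatrix :
      Matrix (Fin n) (Fin n) ℝ →+* Matrix (Fin n) (Fin n) ℂ)) A k
  simpa [RingHom.mapMatrix_apply] using this

lemma kernel_transfer {n : ℕ} {q : Type*} [Fintype q] (M : Matrix (Fin n) q ℝ) :
    (∀ x : Fin n → ℝ, x ᵥ* M = 0 → x = 0) ↔
      (∀ z : Fin n → ℂ, z ᵥ* M.map Complex.ofReal = 0 → z = 0) := by
  constructor
  · intro h z hz
    have hre : (fun i => (z i).re) ᵥ* M = 0 := by
      funext j
      have := congrFun hz j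
      simp only [vecMul, dotProduct, Matrix.map_apply, Pi.zero_apply] at this ⊢
      have := congrArg Complex.re this
      simpa [Complex.re_sum] using this
    have him : (fun i => (z i).im) ᵥ* M = 0 := by
      funext j
      have := congrFun hz j
      simp only [vecMul, dotProduct, Matrix.map_apply, Pi.zero_apply] at this ⊢
      have := congrArg Complex.im this
      simpa [Complex.im_sum] using this
    have h1 := h _ hre
    have h2 := h _ him
    funext i
    have e1 := congrFun h1 i
    have e2 := congrFun h2 i
    simp only [Pi.zero_apply] at e1 e2 ⊢
    exact Complex.ext e1 e2
  · intro h x hx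
    have : (fun i => (x i : ℂ)) ᵥ* M.map Complex.ofReal = 0 := by
      funext j
      have := congrFun hx j
      simp only [vecMul, dotProduct, Matrix.map_apply, Pi.zero_apply] at this ⊢
      rw [← Complex.ofReal_zero, ← this]
      push_cast
      rfl
    have := h _ this
    funext i
    have := congrFun this i
    simpa using this

lemma vecMul_sum' {n : ℕ} {q : Type*} [Fintype q] {ι : Type*} (s : Finset ι)
    (M : ι → Matrix (Fin n) q ℂ) (z : Fin n → ℂ) :
    z ᵥ* (∑ i ∈ s, M i) = ∑ i ∈ s, z ᵥ* M i := by
  funext j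
  simp only [vecMul, dotProduct, Matrix.sum_apply, Finset.mul_sum, Finset.sum_apply]
  rw [Finset.sum_comm]

lemma vecMul_smul' {n : ℕ} {q : Type*} [Fintype q] (c : ℂ) (M : Matrix (Fin n) q ℂ)
    (z : Fin n → ℂ) : z ᵥ* (c • M) = c • (z ᵥ* M) := by
  funext j
  simp [vecMul, dotProduct, Finset.mul_sum, mul_left_comm]

lemma vecMul_smul_one {n : ℕ} (l : ℂ) (z : Fin n → ℂ) :
    z ᵥ* (l • (1 : Matrix (Fin n) (Fin n) ℂ)) = l • z := by
  rw [vecMul_smul', vecMul_one]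

lemma hautus_kernel {n p : ℕ} (A : Matrix (Fin n) (Fin n) ℝ) (B : Matrix (Fin n) (Fin p) ℝ)
    (l : ℂ) (z : Fin n → ℂ) :
    z ᵥ* hautusMatrix A B l = 0 ↔
      (z ᵥ* A.map Complex.ofReal = l • z ∧ z ᵥ* B.map Complex.ofReal = 0) := by
  rw [hautusMatrix, vecMul_fromCols]
  constructor
  · intro h
    have h1 : z ᵥ* (l • (1 : Matrix (Fin n) (Fin n) ℂ) - A.map Complex.ofReal) = 0 := by
      funext j; exact congrFun h (Sum.inl j)
    have h2 : z ᵥ* B.map Complex.ofReal = 0 := by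
      funext j; exact congrFun h (Sum.inr j)
    rw [vecMul_sub, vecMul_smul_one, sub_eq_zero] at h1
    exact ⟨h1.symm, h2⟩
  · rintro ⟨h1, h2⟩
    have : z ᵥ* (l • (1 : Matrix (Fin n) (Fin n) ℂ) - A.map Complex.ofReal) = 0 := by
      rw [vecMul_sub, vecMul_smul_one, h1, sub_self]
    rw [this, h2]
    funext j; cases j <;> rfl

lemma pow_vecMul_zero {n p : ℕ} (Ac : Matrix (Fin n) (Fin n) ℂ) (Bc : Matrix (Fin n) (Fin p) ℂ)
    (z : Fin n → ℂ) (h : ∀ k, k < n → z ᵥ* (Ac ^ k * Bc) = 0) :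
    ∀ k, z ᵥ* (Ac ^ k * Bc) = 0 := by
  have hCH : Ac ^ n = -∑ i ∈ Finset.range n, (Ac.charpoly.coeff i) • Ac ^ i := by
    have h0 := Ac.aeval_self_charpoly
    rw [Polynomial.aeval_eq_sum_range] at h0
    rw [Matrix.charpoly_natDegree_eq_dim, Fintype.card_fin, Finset.sum_range_succ] at h0
    have hmon : Ac.charpoly.coeff n = 1 := by
      have := (Ac.charpoly_monic).coeff_natDegree
      rwa [Matrix.charpoly_natDegree_eq_dim, Fintype.card_fin] at this
    rw [hmon, one_smul] at h0
    exact eq_neg_of_add_eq_zero_left (by rwa [add_comm] at h0)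
  intro m
  induction m using Nat.strong_induction_on with
  | _ m ih =>
    by_cases hm : m < n
    · exact h m hm
    · push_neg at hm
      obtain ⟨t, rfl⟩ : ∃ t, m = t + n := ⟨m - n, by omega⟩
      have hexp : Ac ^ (t + n) * Bc
          = ∑ i ∈ Finset.range n, (-(Ac.charpoly.coeff i)) • (Ac ^ (t + i) * Bc) := by
        rw [pow_add, hCH]
        rw [Matrix.mul_neg, Matrix.neg_mul, Matrix.mul_sum, Matrix.sum_mul]
        rw [← Finset.sum_neg_distrib]
        refine Finset.sum_congr rfl fun i hi => ?_
        rw [Matrix.mul_smul, Matrix.smul_mul, pow_add, neg_smul, Matrix.mul_assoc]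
      rw [hexp, vecMul_sum']
      refine Finset.sum_eq_zero fun i hi => ?_
      rw [vecMul_smul', ih (t + i) (by simp at hi; omega), smul_zero]

/-- **Hautus test.** The following are equivalent:
(a) `(A,B)` is controllable; (b) `rank [λI − A, B] = n` for all `λ ∈ ℂ`;
(c) `rank [λI − A, B] = n` for every eigenvalue `λ` of `A`. -/
theorem statement_7 (n p : ℕ) (A : Matrix (Fin n) (Fin n) ℝ)
    (B : Matrix (Fin n) (Fin p) ℝ) :
    ((kalmanMatrix A B).rank = n ↔ ∀ l : ℂ, (hautusMatrix A B l).rank = n) ∧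
    ((∀ l : ℂ, (hautusMatrix A B l).rank = n) ↔
      ∀ l : ℂ, (l • (1 : Matrix (Fin n) (Fin n) ℂ) - A.map Complex.ofReal).det = 0 →
        (hautusMatrix A B l).rank = n) := by
  have hent : ∀ (i k : Fin n) (j : Fin p),
      ((kalmanMatrix A B).map Complex.ofReal) i (k, j)
        = ((A.map Complex.ofReal) ^ (k : ℕ) * (B.map Complex.ofReal)) i j := by
    intro i k j
    rw [← map_pow_mul]
    rfl
  have hvm : ∀ (z : Fin n → ℂ) (k : Fin n) (j : Fin p),
      (z ᵥ* (kalmanMatrix A B).map Complex.ofReal) (k, j)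
        = (z ᵥ* ((A.map Complex.ofReal) ^ (k : ℕ) * (B.map Complex.ofReal))) j := by
    intro z k j
    simp only [vecMul, dotProduct, hent]
  have hKmem : ∀ z : Fin n → ℂ,
      z ᵥ* ((kalmanMatrix A B).map Complex.ofReal) = 0 ↔
      ∀ k : Fin n, z ᵥ* ((A.map Complex.ofReal) ^ (k : ℕ) * (B.map Complex.ofReal)) = 0 := by
    intro z
    constructor
    · intro hz k
      funext j
      rw [← hvm]
      exact congrFun hz (k, j)
    · intro hz
      funext kj
      obtain ⟨k, j⟩ := kj
      rw [Pi.zero_apply, hvm]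
      exact congrFun (hz k) j
  have hKal : (kalmanMatrix A B).rank = n ↔
      ∀ z : Fin n → ℂ, z ᵥ* ((kalmanMatrix A B).map Complex.ofReal) = 0 → z = 0 := by
    rw [rank_eq_card_iff_vecMul, kernel_transfer]
  constructor
  · constructor
    · -- Kalman full rank → Hautus full rank everywhere
      intro hK l
      rw [rank_eq_card_iff_vecMul]
      intro z hz
      rw [hautus_kernel] at hz
      obtain ⟨h1, h2⟩ := hz
      have hall : ∀ k : ℕ, z ᵥ* ((A.map Complex.ofReal) ^ k * (B.map Complex.ofReal)) = 0 := by
        intro k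
        induction k with
        | zero => simpa using h2
        | succ k ihk =>
          rw [pow_succ', Matrix.mul_assoc, ← vecMul_vecMul, h1, smul_vecMul, ihk, smul_zero]
      exact hKal.mp hK z ((hKmem z).mpr fun k => hall k)
    · -- Hautus full rank everywhere → Kalman full rank
      intro hH
      rw [hKal]
      intro z hz
      by_contra hz0
      have hfin : ∀ k : Fin n,
          z ᵥ* ((A.map Complex.ofReal) ^ (k : ℕ) * (B.map Complex.ofReal)) = 0 :=
        (hKmem z).mp hz
      have hall : ∀ k : ℕ, z ᵥ* ((A.map Complex.ofReal) ^ k * (B.map Complex.ofReal)) = 0 :=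
        pow_vecMul_zero _ _ z (fun k hk => hfin ⟨k, hk⟩)
      -- the invariant subspace
      set W : Submodule ℂ (Fin n → ℂ) :=
        ⨅ k : ℕ, LinearMap.ker (((A.map Complex.ofReal) ^ k * (B.map Complex.ofReal)).vecMulLinear)
        with hW
      have hmemW : ∀ w : Fin n → ℂ, w ∈ W ↔
          ∀ k : ℕ, w ᵥ* ((A.map Complex.ofReal) ^ k * (B.map Complex.ofReal)) = 0 := by
        intro w
        simp [hW, Submodule.mem_iInf, LinearMap.mem_ker, vecMulLinear_apply]
      have hzW : z ∈ W := (hmemW z).mpr hall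
      have hinv : ∀ w ∈ W, (A.map Complex.ofReal).vecMulLinear w ∈ W := by
        intro w hw
        rw [hmemW] at hw ⊢
        intro k
        rw [vecMulLinear_apply, vecMul_vecMul, ← Matrix.mul_assoc, ← pow_succ']
        exact hw (k + 1)
      have : Nontrivial W := nontrivial_of_ne ⟨z, hzW⟩ 0 (by
        intro hcon
        exact hz0 (by simpa using congrArg Subtype.val hcon))
      set f : Module.End ℂ W := ((A.map Complex.ofReal).vecMulLinear).restrict hinv with hf
      obtain ⟨l, hl⟩ := Module.End.exists_eigenvalue f
      obtain ⟨w, hw⟩ := hl.exists_hasEigenvector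
      have hwv : (w : Fin n → ℂ) ᵥ* (A.map Complex.ofReal) = l • (w : Fin n → ℂ) := by
        have := hw.apply_eq_smul
        have := congrArg (Subtype.val) this
        rw [LinearMap.restrict_coe_apply] at this
        simpa [vecMulLinear_apply] using this
      have hwB : (w : Fin n → ℂ) ᵥ* (B.map Complex.ofReal) = 0 := by
        have := (hmemW _).mp w.2 0
        simpa using this
      have hw0 : (w : Fin n → ℂ) ≠ 0 := by
        intro hcon
        exact hw.right (by exact_mod_cast Subtype.ext hcon)
      have := (rank_eq_card_iff_vecMul (hautusMatrix A B l)).mp (hH l) (w : Fin n → ℂ)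
        ((hautus_kernel A B l _).mpr ⟨hwv, hwB⟩)
      exact hw0 this
  · constructor
    · intro h l _
      exact h l
    · intro h l
      by_cases hdet : (l • (1 : Matrix (Fin n) (Fin n) ℂ) - A.map Complex.ofReal).det = 0
      · exact h l hdet
      · rw [rank_eq_card_iff_vecMul]
        intro z hz
        rw [hautus_kernel] at hz
        have hzero : z ᵥ* (l • (1 : Matrix (Fin n) (Fin n) ℂ) - A.map Complex.ofReal) = 0 := by
          rw [vecMul_sub, vecMul_smul_one, hz.1, sub_self]
        have hu : IsUnit (l • (1 : Matrix (Fin n) (Fin n) ℂ) - A.map Complex.ofReal) :=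
          (Matrix.isUnit_iff_isUnit_det _).mpr (isUnit_iff_ne_zero.mpr hdet)
        have hinj := (Matrix.vecMul_injective_iff_isUnit).mpr hu
        have : z ᵥ* (l • (1 : Matrix (Fin n) (Fin n) ℂ) - A.map Complex.ofReal)
            = (0 : Fin n → ℂ) ᵥ* (l • (1 : Matrix (Fin n) (Fin n) ℂ) - A.map Complex.ofReal) := by
          rw [hzero, Matrix.zero_vecMul]
        exact hinj this
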